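/- Abel inversion: let h : (0,1] → ℝ be continuous and suppose g : (0,1] → ℝ is continuous and satisfies ∫_x^1 g(ε)/√(ε² − x²) dε = h(x) for all x ∈ (0,1). If g₁ and g₂ are two continuous solutions, then g₁ = g₂ on (0,1). -/

import Mathlib

/-!
Abel's trick: multiply the transform at `x` by `x / √(x² - y²)` and integrate over `y < x < b`.
On the triangle `y < x < ε ≤ b` the integrals may be swapped (the integrand for `‖g‖` has the
same shape and computable sections), and the inner integral
`∫_y^ε x / (√(x² - y²) √(ε² - x²)) dx = π / 2` (a primitive is
`arcsin ((2x² - y² - ε²) / (ε² - y²)) / 2`) is independent of `ε`. Hence the Abel transform of `g`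
determines `y ↦ ∫_y^b g` on `(a, b)`, and differentiating recovers the continuous `g`.
-/

open MeasureTheory Real Set Topology

noncomputable def abelKernel (y ε x : ℝ) : ℝ := x / (√(x ^ 2 - y ^ 2) * √(ε ^ 2 - x ^ 2))

section Kernel

variable {y ε x : ℝ}

lemma abelKernel_nonneg (hx : 0 ≤ x) : 0 ≤ abelKernel y ε x := by
  unfold abelKernel; positivity

lemma hasDerivAt_abelKernel_primitive (hy : 0 ≤ y) (hx : x ∈ Ioo y ε) :
    HasDerivAt (fun x => arcsin ((2 * x ^ 2 - y ^ 2 - ε ^ 2) / (ε ^ 2 - y ^ 2)) / 2)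
      (abelKernel y ε x) x := by
  obtain ⟨hyx, hxε⟩ := hx
  have hd : 0 < ε ^ 2 - y ^ 2 := by nlinarith
  set u := (2 * x ^ 2 - y ^ 2 - ε ^ 2) / (ε ^ 2 - y ^ 2)
  have hu₁ : u < 1 := by rw [div_lt_one hd]; nlinarith
  have hu₂ : -1 < u := by rw [lt_div_iff₀ hd]; nlinarith
  have hinner : HasDerivAt (fun x => (2 * x ^ 2 - y ^ 2 - ε ^ 2) / (ε ^ 2 - y ^ 2))
      (4 * x / (ε ^ 2 - y ^ 2)) x := by
    refine ((((hasDerivAt_pow 2 x).const_mul 2).sub_const (y ^ 2)).sub_const (ε ^ 2)).div_const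
      (ε ^ 2 - y ^ 2) |>.congr_deriv ?_
    ring
  refine (((hasDerivAt_arcsin hu₂.ne' hu₁.ne).comp x hinner).div_const 2).congr_deriv ?_
  have hA : 0 < x ^ 2 - y ^ 2 := by nlinarith
  have hB : 0 < ε ^ 2 - x ^ 2 := by nlinarith
  have hsqrt : √(1 - u ^ 2) = 2 * √(x ^ 2 - y ^ 2) * √(ε ^ 2 - x ^ 2) / (ε ^ 2 - y ^ 2) := by
    rw [sqrt_eq_iff_mul_self_eq_of_pos (by positivity)]
    field_simp
    rw [sq_sqrt hA.le, sq_sqrt hB.le]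
    simp only [u]
    field_simp
    ring
  rw [hsqrt, abelKernel]
  field_simp
  ring

lemma continuous_abelKernel_primitive :
    Continuous (fun x => arcsin ((2 * x ^ 2 - y ^ 2 - ε ^ 2) / (ε ^ 2 - y ^ 2)) / 2) := by
  fun_prop

lemma integrableOn_abelKernel (hy : 0 ≤ y) :
    IntegrableOn (abelKernel y ε) (Ioc y ε) :=
  intervalIntegral.integrableOn_deriv_of_nonneg continuous_abelKernel_primitive.continuousOn
    (fun _ hx => hasDerivAt_abelKernel_primitive hy hx)
    (fun _ hx => abelKernel_nonneg (hy.trans hx.1.le))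

lemma integral_abelKernel (hy : 0 ≤ y) (hyε : y < ε) :
    ∫ x in y..ε, abelKernel y ε x = π / 2 := by
  have hd : ε ^ 2 - y ^ 2 ≠ 0 := by nlinarith
  rw [intervalIntegral.integral_eq_sub_of_hasDerivAt_of_le hyε.le
      continuous_abelKernel_primitive.continuousOn
      (fun _ hx => hasDerivAt_abelKernel_primitive hy hx)
      ((intervalIntegrable_iff_integrableOn_Ioc_of_le hyε.le).2 (integrableOn_abelKernel hy))]
  have h₁ : (2 * ε ^ 2 - y ^ 2 - ε ^ 2) / (ε ^ 2 - y ^ 2) = 1 := by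
    rw [div_eq_one_iff_eq hd]; ring
  have h₂ : (2 * y ^ 2 - y ^ 2 - ε ^ 2) / (ε ^ 2 - y ^ 2) = -1 := by
    rw [div_eq_iff hd]; ring
  rw [h₁, h₂, arcsin_one, arcsin_neg_one]
  ring

end Kernel

noncomputable def abelTransform (b : ℝ) (g : ℝ → ℝ) (x : ℝ) : ℝ :=
  ∫ ε in x..b, g ε / √(ε ^ 2 - x ^ 2)

noncomputable def abelIntegrand (y b : ℝ) (g : ℝ → ℝ) : ℝ × ℝ → ℝ :=
  {p | y < p.1 ∧ p.1 < p.2 ∧ p.2 ≤ b}.indicator fun p => g p.2 * abelKernel y p.2 p.1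

section abelIntegrand

variable {y b : ℝ} {g : ℝ → ℝ}

lemma abelIntegrand_mk (x ε : ℝ) : abelIntegrand y b g (x, ε) =
    if y < x ∧ x < ε ∧ ε ≤ b then g ε * abelKernel y ε x else 0 := by
  rw [abelIntegrand, indicator_apply]
  rfl

lemma integral_abelIntegrand_prodMk_left (x : ℝ) : ∫ ε, abelIntegrand y b g (x, ε) =
    (Ioo y b).indicator (fun x => x / √(x ^ 2 - y ^ 2) * abelTransform b g x) x := by
  by_cases hx : x ∈ Ioo y b
  · have hsection : (fun ε => abelIntegrand y b g (x, ε)) =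
        (Ioc x b).indicator fun ε => x / √(x ^ 2 - y ^ 2) * (g ε / √(ε ^ 2 - x ^ 2)) := by
      ext ε
      simp only [abelIntegrand_mk, indicator_apply, mem_Ioc, abelKernel]
      split_ifs <;> first | (exfalso; grind) | ring
    rw [hsection, integral_indicator measurableSet_Ioc, ← intervalIntegral.integral_of_le hx.2.le,
      intervalIntegral.integral_const_mul, indicator_of_mem hx, abelTransform]
  · rw [indicator_of_notMem hx, ← integral_zero ℝ ℝ]
    congr with ε
    rw [abelIntegrand_mk, if_neg fun h => hx ⟨h.1, h.2.1.trans_le h.2.2⟩]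

lemma abelIntegrand_prodMk_right (ε : ℝ) : (fun x => abelIntegrand y b g (x, ε)) =
    if ε ∈ Ioc y b then (Ioo y ε).indicator fun x => g ε * abelKernel y ε x else 0 := by
  ext x
  by_cases hε : ε ∈ Ioc y b <;>
    simp only [hε, abelIntegrand_mk, indicator_apply, mem_Ioo, if_true, if_false] <;>
    split_ifs <;> first | rfl | (exfalso; grind)

lemma integral_abelIntegrand_prodMk_right (hy : 0 ≤ y) (ε : ℝ) :
    ∫ x, abelIntegrand y b g (x, ε) = (Ioc y b).indicator (fun ε => π / 2 * g ε) ε := by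
  rw [abelIntegrand_prodMk_right]
  by_cases hε : ε ∈ Ioc y b
  · rw [if_pos hε, indicator_of_mem hε, integral_indicator measurableSet_Ioo,
      integral_const_mul, ← integral_Ioc_eq_integral_Ioo,
      ← intervalIntegral.integral_of_le hε.1.le, integral_abelKernel hy hε.1, mul_comm]
  · rw [if_neg hε, indicator_of_notMem hε, Pi.zero_def, integral_zero]

lemma integrable_abelIntegrand_prodMk_right (hy : 0 ≤ y) (ε : ℝ) :
    Integrable (fun x => abelIntegrand y b g (x, ε)) := by
  rw [abelIntegrand_prodMk_right]
  split_ifs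
  · rw [integrable_indicator_iff measurableSet_Ioo]
    exact ((integrableOn_abelKernel hy).mono_set Ioo_subset_Ioc_self).const_mul _
  · exact integrable_zero _ _ _

lemma norm_abelIntegrand (hy : 0 ≤ y) (p : ℝ × ℝ) :
    ‖abelIntegrand y b g p‖ = abelIntegrand y b (fun ε => ‖g ε‖) p := by
  obtain ⟨x, ε⟩ := p
  rw [abelIntegrand_mk, abelIntegrand_mk]
  split_ifs with h
  · rw [norm_mul, Real.norm_of_nonneg (abelKernel_nonneg (hy.trans h.1.le))]
  · exact norm_zero

lemma aestronglyMeasurable_abelIntegrand (hg : ContinuousOn g (Icc y b)) :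
    AEStronglyMeasurable (abelIntegrand y b g) (volume.prod volume) := by
  have hS : MeasurableSet {p : ℝ × ℝ | y < p.1 ∧ p.1 < p.2 ∧ p.2 ≤ b} :=
    (measurableSet_lt measurable_const measurable_fst).inter
      ((measurableSet_lt measurable_fst measurable_snd).inter
        (measurableSet_le measurable_snd measurable_const))
  refine (aestronglyMeasurable_indicator_iff hS).2 (AEStronglyMeasurable.mul ?_ ?_)
  · exact (hg.comp continuous_snd.continuousOn
      fun p hp => ⟨(hp.1.trans hp.2.1).le, hp.2.2⟩).aestronglyMeasurable hS
  · exact (measurable_fst.div (by fun_prop)).aestronglyMeasurable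

lemma integrable_abelIntegrand (hy : 0 ≤ y) (hg : ContinuousOn g (Icc y b)) :
    Integrable (abelIntegrand y b g) (volume.prod volume) := by
  rw [integrable_prod_iff' (aestronglyMeasurable_abelIntegrand hg)]
  refine ⟨ae_of_all _ (integrable_abelIntegrand_prodMk_right hy), ?_⟩
  simp_rw [norm_abelIntegrand hy, integral_abelIntegrand_prodMk_right hy]
  exact (integrable_indicator_iff measurableSet_Ioc).2
    ((hg.norm.integrableOn_Icc.mono_set Ioc_subset_Icc_self).const_mul _)

end abelIntegrand

theorem integral_mul_abelTransform {y b : ℝ} {g : ℝ → ℝ} (hy : 0 ≤ y) (hyb : y ≤ b)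
    (hg : ContinuousOn g (Icc y b)) :
    ∫ x in Ioo y b, x / √(x ^ 2 - y ^ 2) * abelTransform b g x = π / 2 * ∫ ε in y..b, g ε := by
  calc ∫ x in Ioo y b, x / √(x ^ 2 - y ^ 2) * abelTransform b g x
      = ∫ x, ∫ ε, abelIntegrand y b g (x, ε) := by
        simp_rw [integral_abelIntegrand_prodMk_left]
        rw [integral_indicator measurableSet_Ioo]
    _ = ∫ ε, ∫ x, abelIntegrand y b g (x, ε) :=
        integral_integral_swap (integrable_abelIntegrand hy hg)
    _ = ∫ ε in Ioc y b, π / 2 * g ε := by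
        simp_rw [integral_abelIntegrand_prodMk_right hy]
        rw [integral_indicator measurableSet_Ioc]
    _ = π / 2 * ∫ ε in y..b, g ε := by
        rw [integral_const_mul, intervalIntegral.integral_of_le hyb]

lemma hasDerivAt_integral_left_of_continuousOn {a b z : ℝ} {g : ℝ → ℝ}
    (hg : ContinuousOn g (Ioc a b)) (hz : z ∈ Ioo a b) :
    HasDerivAt (fun u => ∫ t in u..b, g t) (-g z) z :=
  intervalIntegral.integral_hasDerivAt_left
    ((hg.mono (by rw [uIcc_of_le hz.2.le]; exact Icc_subset_Ioc hz.1 le_rfl)).intervalIntegrable)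
    ((hg.mono Ioo_subset_Ioc_self).stronglyMeasurableAtFilter isOpen_Ioo z hz)
    ((hg.mono Ioo_subset_Ioc_self).continuousAt (Ioo_mem_nhds hz.1 hz.2))

theorem eqOn_of_forall_integral_eq {a b : ℝ} {g₁ g₂ : ℝ → ℝ} (hg₁ : ContinuousOn g₁ (Ioc a b))
    (hg₂ : ContinuousOn g₂ (Ioc a b)) (h : ∀ y ∈ Ioo a b, ∫ t in y..b, g₁ t = ∫ t in y..b, g₂ t) :
    EqOn g₁ g₂ (Ioo a b) := by
  intro z hz
  have hF : (fun u => ∫ t in u..b, g₁ t) =ᶠ[𝓝 z] fun u => ∫ t in u..b, g₂ t :=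
    Filter.eventually_of_mem (Ioo_mem_nhds hz.1 hz.2) h
  exact neg_inj.mp ((hasDerivAt_integral_left_of_continuousOn hg₁ hz).unique
    ((hasDerivAt_integral_left_of_continuousOn hg₂ hz).congr_of_eventuallyEq hF))

theorem eqOn_of_abelTransform_eqOn {a b : ℝ} {g₁ g₂ : ℝ → ℝ} (ha : 0 ≤ a)
    (hg₁ : ContinuousOn g₁ (Ioc a b)) (hg₂ : ContinuousOn g₂ (Ioc a b))
    (h : EqOn (abelTransform b g₁) (abelTransform b g₂) (Ioo a b)) : EqOn g₁ g₂ (Ioo a b) := by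
  refine eqOn_of_forall_integral_eq hg₁ hg₂ fun y hy => ?_
  have hsub : Icc y b ⊆ Ioc a b := Icc_subset_Ioc hy.1 le_rfl
  have hweighted : ∫ x in Ioo y b, x / √(x ^ 2 - y ^ 2) * abelTransform b g₁ x =
      ∫ x in Ioo y b, x / √(x ^ 2 - y ^ 2) * abelTransform b g₂ x :=
    setIntegral_congr_fun measurableSet_Ioo fun x hx => by
      rw [h (Ioo_subset_Ioo_left hy.1.le hx)]
  rw [integral_mul_abelTransform (ha.trans hy.1.le) hy.2.le (hg₁.mono hsub),
    integral_mul_abelTransform (ha.trans hy.1.le) hy.2.le (hg₂.mono hsub)] at hweighted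
  exact mul_left_cancel₀ (by positivity) hweighted

theorem stmt_18_general (h g₁ g₂ : ℝ → ℝ)
    (hg₁ : ContinuousOn g₁ (Set.Ioc 0 1)) (hg₂ : ContinuousOn g₂ (Set.Ioc 0 1))
    (heq₁ : ∀ x : ℝ, 0 < x → x < 1 →
      ∫ ε in x..(1 : ℝ), g₁ ε / Real.sqrt (ε ^ 2 - x ^ 2) = h x)
    (heq₂ : ∀ x : ℝ, 0 < x → x < 1 →
      ∫ ε in x..(1 : ℝ), g₂ ε / Real.sqrt (ε ^ 2 - x ^ 2) = h x) :
    Set.EqOn g₁ g₂ (Set.Ioo 0 1) :=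
  eqOn_of_abelTransform_eqOn le_rfl hg₁ hg₂ fun x hx =>
    (heq₁ x hx.1 hx.2).trans (heq₂ x hx.1 hx.2).symm

/-- Abel inversion uniqueness: if g₁, g₂ are continuous on (0,1] and both satisfy
∫_x^1 g(ε)/√(ε²−x²) dε = h(x) for all x ∈ (0,1), with h continuous on (0,1],
then g₁ = g₂ on (0,1). -/
theorem stmt_18 (h g₁ g₂ : ℝ → ℝ)
    (hh : ContinuousOn h (Set.Ioc 0 1))
    (hg₁ : ContinuousOn g₁ (Set.Ioc 0 1)) (hg₂ : ContinuousOn g₂ (Set.Ioc 0 1))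
    (heq₁ : ∀ x : ℝ, 0 < x → x < 1 →
      ∫ ε in x..(1 : ℝ), g₁ ε / Real.sqrt (ε ^ 2 - x ^ 2) = h x)
    (heq₂ : ∀ x : ℝ, 0 < x → x < 1 →
      ∫ ε in x..(1 : ℝ), g₂ ε / Real.sqrt (ε ^ 2 - x ^ 2) = h x) :
    Set.EqOn g₁ g₂ (Set.Ioo 0 1) :=
  stmt_18_general h g₁ g₂ hg₁ hg₂ heq₁ heq₂
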